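/- Let σ = (1/4)·∑_{i=1}^{4} |ψ_{i+}⟩⟨ψ_{i+}| and ρ = (1/5)·(|ψ₀⟩⟨ψ₀| + ∑_{i=1}^{4} |ψ_{i−}⟩⟨ψ_{i−}|) on ℂ³⊗ℂ³, and let P = ∑_{i=1}^{4} |ψ_{i+}⟩⟨ψ_{i+}|. Then {P, I − P} is a two-outcome POVM that perfectly distinguishes σ from ρ: tr(P·σ) = 1 and tr(P·ρ) = 0, and moreover both P and I − P are separable, being sums of rank-one projectors onto product vectors (indeed I − P = |ψ₀⟩⟨ψ₀| + ∑_{i=1}^{4} |ψ_{i−}⟩⟨ψ_{i−}|, since the nine domino states form an orthonormal basis of ℂ³⊗ℂ³). -/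

import Mathlib

open Matrix
open scoped ComplexOrder

/-- The rank-one matrix `|ψ⟩⟨ψ|` with `(i,j)`-entry `ψ i * conj (ψ j)`. -/
noncomputable def ketbra {n : Type*} (ψ : n → ℂ) : Matrix n n ℂ :=
  Matrix.vecMulVec ψ (star ψ)

/-- Kronecker product of vectors. -/
noncomputable def vkron {m n : Type*} (a : m → ℂ) (b : n → ℂ) : m × n → ℂ :=
  fun p => a p.1 * b p.2

/-- Normalized sum `(a + b)/√2`. -/
noncomputable def nplus (a b : Fin 3 → ℂ) : Fin 3 → ℂ :=
  (Real.sqrt 2 : ℂ)⁻¹ • (a + b)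

/-- Normalized difference `(a − b)/√2`. -/
noncomputable def nminus (a b : Fin 3 → ℂ) : Fin 3 → ℂ :=
  (Real.sqrt 2 : ℂ)⁻¹ • (a - b)

noncomputable def e0 : Fin 3 → ℂ := ![1, 0, 0]
noncomputable def e1 : Fin 3 → ℂ := ![0, 1, 0]
noncomputable def e2 : Fin 3 → ℂ := ![0, 0, 1]

noncomputable def ψ0 : Fin 3 × Fin 3 → ℂ := vkron e1 e1
noncomputable def ψ1p : Fin 3 × Fin 3 → ℂ := vkron e0 (nplus e0 e1)
noncomputable def ψ1m : Fin 3 × Fin 3 → ℂ := vkron e0 (nminus e0 e1)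
noncomputable def ψ2p : Fin 3 × Fin 3 → ℂ := vkron (nplus e0 e1) e2
noncomputable def ψ2m : Fin 3 × Fin 3 → ℂ := vkron (nminus e0 e1) e2
noncomputable def ψ3p : Fin 3 × Fin 3 → ℂ := vkron (nplus e1 e2) e0
noncomputable def ψ3m : Fin 3 × Fin 3 → ℂ := vkron (nminus e1 e2) e0
noncomputable def ψ4p : Fin 3 × Fin 3 → ℂ := vkron e2 (nplus e1 e2)
noncomputable def ψ4m : Fin 3 × Fin 3 → ℂ := vkron e2 (nminus e1 e2)

/-- `σ = (1/4)·∑ᵢ |ψ_{i+}⟩⟨ψ_{i+}|`. -/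
noncomputable def σState : Matrix (Fin 3 × Fin 3) (Fin 3 × Fin 3) ℂ :=
  (1/4 : ℂ) • (ketbra ψ1p + ketbra ψ2p + ketbra ψ3p + ketbra ψ4p)

/-- `ρ = (1/5)·(|ψ₀⟩⟨ψ₀| + ∑ᵢ |ψ_{i−}⟩⟨ψ_{i−}|)`. -/
noncomputable def ρState : Matrix (Fin 3 × Fin 3) (Fin 3 × Fin 3) ℂ :=
  (1/5 : ℂ) • (ketbra ψ0 + ketbra ψ1m + ketbra ψ2m + ketbra ψ3m + ketbra ψ4m)

/-- `P = ∑ᵢ |ψ_{i+}⟩⟨ψ_{i+}|`. -/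
noncomputable def Pop : Matrix (Fin 3 × Fin 3) (Fin 3 × Fin 3) ℂ :=
  ketbra ψ1p + ketbra ψ2p + ketbra ψ3p + ketbra ψ4p


section Aux

lemma ketbra_posSemidef {n : Type*} [Fintype n] (ψ : n → ℂ) : (ketbra ψ).PosSemidef := by
  refine Matrix.PosSemidef.of_dotProduct_mulVec_nonneg ?_ ?_
  · ext i j
    simp [ketbra, vecMulVec_apply, conjTranspose_apply, mul_comm]
  · intro x
    have h : dotProduct (star x) ((ketbra ψ) *ᵥ x)
        = star (dotProduct (star ψ) x) * (dotProduct (star ψ) x) := by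
      simp [ketbra, dotProduct, mulVec, Finset.mul_sum, Finset.sum_mul, vecMulVec_apply,
        star_sum]
      rw [Finset.sum_comm]
      apply Finset.sum_congr rfl; intro i _
      apply Finset.sum_congr rfl; intro j _
      ring
    rw [h]
    exact star_mul_self_nonneg _

lemma trace_ketbra_mul {n : Type*} [Fintype n] (a b : n → ℂ) :
    (ketbra a * ketbra b).trace = (dotProduct (star a) b) * (dotProduct (star b) a) := by
  simp [ketbra, Matrix.trace, Matrix.mul_apply, vecMulVec_apply, dotProduct, diag,
    Finset.mul_sum, Finset.sum_mul]
  apply Finset.sum_congr rfl; intro i _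
  apply Finset.sum_congr rfl; intro j _
  ring

lemma dot_vkron {m n : Type*} [Fintype m] [Fintype n] (a c : m → ℂ) (b d : n → ℂ) :
    dotProduct (star (vkron a b)) (vkron c d)
      = dotProduct (star a) c * dotProduct (star b) d := by
  simp [vkron, dotProduct, Fintype.sum_prod_type, Finset.mul_sum, Finset.sum_mul]
  rw [Finset.sum_comm]
  apply Finset.sum_congr rfl; intro i _
  apply Finset.sum_congr rfl; intro j _
  ring

lemma h2c : ((Real.sqrt 2 : ℝ) : ℂ) * ((Real.sqrt 2 : ℝ) : ℂ) = 2 := by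
  norm_cast
  rw [Real.mul_self_sqrt]
  norm_num

lemma part1 : (Pop * σState).trace = 1 := by
  simp only [Pop, σState, add_mul, mul_add, Matrix.mul_smul, trace_smul, trace_add,
    trace_ketbra_mul, ψ1p, ψ2p, ψ3p, ψ4p]
  simp only [dot_vkron, nplus, e0, e1, e2]
  simp [dotProduct, Fin.sum_univ_three]
  field_simp
  norm_num [h2c]
  linear_combination (-4 * (((Real.sqrt 2 : ℝ) : ℂ) * ((Real.sqrt 2 : ℝ) : ℂ) + 2)) * h2c

lemma part2 : (Pop * ρState).trace = 0 := by
  simp only [Pop, ρState, add_mul, mul_add, Matrix.mul_smul, trace_smul, trace_add,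
    trace_ketbra_mul, ψ0, ψ1p, ψ2p, ψ3p, ψ4p, ψ1m, ψ2m, ψ3m, ψ4m]
  simp only [dot_vkron, nplus, nminus, e0, e1, e2]
  simp [dotProduct, Fin.sum_univ_three]

lemma ketbra_vkron {m n : Type*} (a : m → ℂ) (b : n → ℂ) :
    ketbra (vkron a b) = Matrix.kroneckerMap (· * ·) (ketbra a) (ketbra b) := by
  ext ⟨i, j⟩ ⟨k, l⟩
  simp [ketbra, vkron, vecMulVec_apply, kroneckerMap_apply]
  ring

lemma ketbra_pm_add (a b : Fin 3 → ℂ) :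
    ketbra (nplus a b) + ketbra (nminus a b) = ketbra a + ketbra b := by
  ext i j
  have h2 : ((Real.sqrt 2 : ℝ) : ℂ) * ((Real.sqrt 2 : ℝ) : ℂ) = 2 := h2c
  have hne : ((Real.sqrt 2 : ℝ) : ℂ) ≠ 0 := by
    intro h
    rw [h, mul_zero] at h2
    norm_num at h2
  simp only [ketbra, nplus, nminus, Matrix.add_apply, vecMulVec_apply, Pi.star_apply,
    Pi.smul_apply, Pi.add_apply, Pi.sub_apply, smul_eq_mul, star_mul', star_inv₀,
    Complex.star_def, Complex.conj_ofReal, map_add, map_sub]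
  field_simp
  ring_nf
  rw [show ((Real.sqrt 2 : ℝ) : ℂ) ^ 2 = 2 by rw [sq, h2c]]

lemma hsum3 : ketbra e0 + ketbra e1 + ketbra e2 = (1 : Matrix (Fin 3) (Fin 3) ℂ) := by
  ext i j
  simp only [Matrix.add_apply, ketbra, vecMulVec_apply]
  fin_cases i <;> fin_cases j <;>
    simp [ketbra, e0, e1, e2, vecMulVec_apply, Matrix.one_apply, Matrix.vecHead, Matrix.vecTail]

lemma kron_pm_left (a b : Fin 3 → ℂ) (M : Matrix (Fin 3) (Fin 3) ℂ) :
    Matrix.kroneckerMap (· * ·) (ketbra (nplus a b)) M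
      + Matrix.kroneckerMap (· * ·) (ketbra (nminus a b)) M
      = Matrix.kroneckerMap (· * ·) (ketbra a) M
        + Matrix.kroneckerMap (· * ·) (ketbra b) M := by
  rw [← Matrix.add_kronecker, ← Matrix.add_kronecker, ketbra_pm_add]

lemma kron_pm_right (a b : Fin 3 → ℂ) (M : Matrix (Fin 3) (Fin 3) ℂ) :
    Matrix.kroneckerMap (· * ·) M (ketbra (nplus a b))
      + Matrix.kroneckerMap (· * ·) M (ketbra (nminus a b))
      = Matrix.kroneckerMap (· * ·) M (ketbra a)
        + Matrix.kroneckerMap (· * ·) M (ketbra b) := by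
  rw [← Matrix.kronecker_add, ← Matrix.kronecker_add, ketbra_pm_add]

lemma part5 : 1 - Pop = ketbra ψ0 + ketbra ψ1m + ketbra ψ2m + ketbra ψ3m + ketbra ψ4m := by
  rw [sub_eq_iff_eq_add]
  simp only [Pop, ψ0, ψ1p, ψ2p, ψ3p, ψ4p, ψ1m, ψ2m, ψ3m, ψ4m, ketbra_vkron]
  set K := Matrix.kroneckerMap (· * ·) (α := ℂ) (β := ℂ) (γ := ℂ)
    (l := Fin 3) (m := Fin 3) (n := Fin 3) (p := Fin 3) with hK
  have step : (K (ketbra e1) (ketbra e1) + K (ketbra e0) (ketbra (nminus e0 e1)) +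
      K (ketbra (nminus e0 e1)) (ketbra e2) + K (ketbra (nminus e1 e2)) (ketbra e0) +
      K (ketbra e2) (ketbra (nminus e1 e2))) +
      (K (ketbra e0) (ketbra (nplus e0 e1)) + K (ketbra (nplus e0 e1)) (ketbra e2) +
      K (ketbra (nplus e1 e2)) (ketbra e0) + K (ketbra e2) (ketbra (nplus e1 e2)))
      = (1 : Matrix (Fin 3 × Fin 3) (Fin 3 × Fin 3) ℂ) := by
    have r1 := kron_pm_right e0 e1 (ketbra e0)
    have r2 := kron_pm_left e0 e1 (ketbra e2)
    have r3 := kron_pm_left e1 e2 (ketbra e0)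
    have r4 := kron_pm_right e1 e2 (ketbra e2)
    rw [← hK] at r1 r2 r3 r4
    have lhs_eq : (K (ketbra e1) (ketbra e1) + K (ketbra e0) (ketbra (nminus e0 e1)) +
        K (ketbra (nminus e0 e1)) (ketbra e2) + K (ketbra (nminus e1 e2)) (ketbra e0) +
        K (ketbra e2) (ketbra (nminus e1 e2))) +
        (K (ketbra e0) (ketbra (nplus e0 e1)) + K (ketbra (nplus e0 e1)) (ketbra e2) +
        K (ketbra (nplus e1 e2)) (ketbra e0) + K (ketbra e2) (ketbra (nplus e1 e2)))
        = (K (ketbra e0) (ketbra (nplus e0 e1)) + K (ketbra e0) (ketbra (nminus e0 e1))) +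
          (K (ketbra (nplus e0 e1)) (ketbra e2) + K (ketbra (nminus e0 e1)) (ketbra e2)) +
          (K (ketbra (nplus e1 e2)) (ketbra e0) + K (ketbra (nminus e1 e2)) (ketbra e0)) +
          (K (ketbra e2) (ketbra (nplus e1 e2)) + K (ketbra e2) (ketbra (nminus e1 e2))) +
          K (ketbra e1) (ketbra e1) := by abel
    rw [lhs_eq, r1, r2, r3, r4]
    have : (1 : Matrix (Fin 3 × Fin 3) (Fin 3 × Fin 3) ℂ)
        = K (ketbra e0 + ketbra e1 + ketbra e2) (ketbra e0 + ketbra e1 + ketbra e2) := by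
      rw [hsum3, hK, Matrix.one_kronecker_one]
    rw [this, hK]
    simp only [Matrix.add_kronecker, Matrix.kronecker_add]
    abel
  linear_combination (norm := abel) step.symm

end Aux

theorem stmt_18 :
    (Pop * σState).trace = 1 ∧
    (Pop * ρState).trace = 0 ∧
    Pop.PosSemidef ∧ (1 - Pop).PosSemidef ∧
    1 - Pop = ketbra ψ0 + ketbra ψ1m + ketbra ψ2m + ketbra ψ3m + ketbra ψ4m := by
  refine ⟨part1, part2, ?_, ?_, part5⟩
  · exact (((ketbra_posSemidef ψ1p).add (ketbra_posSemidef ψ2p)).add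
      (ketbra_posSemidef ψ3p)).add (ketbra_posSemidef ψ4p)
  · rw [part5]
    exact ((((ketbra_posSemidef ψ0).add (ketbra_posSemidef ψ1m)).add
      (ketbra_posSemidef ψ2m)).add (ketbra_posSemidef ψ3m)).add (ketbra_posSemidef ψ4m)
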